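/- Let G be a bipartite graph with parts X = {k_1,…,k_p} and Y = {l_1,…,l_q}. Let G' be the graph whose vertex set consists of the vertices of G, a disjoint copy {m_1,…,m_p} ∪ {n_1,…,n_q} of them, and four new vertices k, l, m, n, and whose edges are: all edges of G; an edge m_i n_j whenever k_i l_j is an edge of G; all edges between K_1 = {k, k_1,…,k_p} and K_2 = {m, m_1,…,m_p}; and the pendant edges l–k and n–m. Then G' is a bisplit graph with partition (I_1 ∪ I_2, K_1, K_2), where I_1 = {l, l_1,…,l_q} and I_2 = {n, n_1,…,n_q}, and moreover G' is bipartite with bipartition (K_1 ∪ I_2, K_2 ∪ I_1). -/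
import Mathlib


/-- `D` is a dominating set of `G`: every vertex outside `D` has a neighbour in `D`. -/
def Dominates {V : Type*} (G : SimpleGraph V) (D : Set V) : Prop :=
  ∀ u, u ∉ D → ∃ v ∈ D, G.Adj u v

/-- `S` is a secure dominating set of `G`. -/
def SecureDominates {V : Type*} (G : SimpleGraph V) (S : Set V) : Prop :=
  Dominates G S ∧
    ∀ u, u ∉ S → ∃ v ∈ S, G.Adj u v ∧ Dominates G ((S \ {v}) ∪ {u})

/-- The graph `G'` obtained from a bipartite graph `G` with parts `X` and `Y`.
Vertices: the original vertices (`Sum.inl u`), a disjoint copy of them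
(`Sum.inr (Sum.inl u)`), and four new vertices `k = Sum.inr (Sum.inr 0)`,
`l = Sum.inr (Sum.inr 1)`, `m = Sum.inr (Sum.inr 2)`, `n = Sum.inr (Sum.inr 3)`.
Edges: all edges of `G`; the copies of the edges of `G` (an edge `mᵢ nⱼ`
whenever `kᵢ lⱼ` is an edge of `G`); all edges between `{k} ∪ X` and the copy
`{m} ∪ X`-copy; and the pendant edges `l - k` and `n - m`. -/
def bipartiteBigExt {V : Type*} (G : SimpleGraph V) (X : Set V) :
    SimpleGraph (V ⊕ V ⊕ Fin 4) :=
  SimpleGraph.fromRel (fun a b =>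
    (∃ u v, a = Sum.inl u ∧ b = Sum.inl v ∧ G.Adj u v) ∨
    (∃ u v, a = Sum.inr (Sum.inl u) ∧ b = Sum.inr (Sum.inl v) ∧ G.Adj u v) ∨
    (∃ u v, a = Sum.inl u ∧ u ∈ X ∧ b = Sum.inr (Sum.inl v) ∧ v ∈ X) ∨
    (∃ u, a = Sum.inl u ∧ u ∈ X ∧ b = Sum.inr (Sum.inr 2)) ∨
    (∃ v, a = Sum.inr (Sum.inr 0) ∧ b = Sum.inr (Sum.inl v) ∧ v ∈ X) ∨
    (a = Sum.inr (Sum.inr 0) ∧ b = Sum.inr (Sum.inr 2)) ∨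
    (a = Sum.inr (Sum.inr 1) ∧ b = Sum.inr (Sum.inr 0)) ∨
    (a = Sum.inr (Sum.inr 3) ∧ b = Sum.inr (Sum.inr 2)))

set_option maxHeartbeats 1000000 in
theorem bipartiteBigExt_isBisplit_and_bipartite {V : Type*} [Fintype V]
    (G : SimpleGraph V) (X Y : Set V)
    (hpart : X ∪ Y = Set.univ) (hdisj : Disjoint X Y)
    (hX : ∀ a ∈ X, ∀ b ∈ X, ¬ G.Adj a b)
    (hY : ∀ a ∈ Y, ∀ b ∈ Y, ¬ G.Adj a b) :
    -- with `K₁ = {k} ∪ X`, `K₂ = {m} ∪ X-copy`, `I₁ = {l} ∪ Y`, `I₂ = {n} ∪ Y-copy`: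
    -- `G'` is a bisplit graph with partition `(I₁ ∪ I₂, K₁, K₂)`
    ((Sum.inl '' Y ∪ {Sum.inr (Sum.inr 1)} : Set (V ⊕ V ⊕ Fin 4)) ∪
        ((Sum.inr ∘ Sum.inl) '' Y ∪ {Sum.inr (Sum.inr 3)})) ∪
      (Sum.inl '' X ∪ {Sum.inr (Sum.inr 0)}) ∪
      ((Sum.inr ∘ Sum.inl) '' X ∪ {Sum.inr (Sum.inr 2)}) = Set.univ ∧
    Disjoint ((Sum.inl '' Y ∪ {Sum.inr (Sum.inr 1)} : Set (V ⊕ V ⊕ Fin 4)) ∪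
        ((Sum.inr ∘ Sum.inl) '' Y ∪ {Sum.inr (Sum.inr 3)}))
      (Sum.inl '' X ∪ {Sum.inr (Sum.inr 0)}) ∧
    Disjoint ((Sum.inl '' Y ∪ {Sum.inr (Sum.inr 1)} : Set (V ⊕ V ⊕ Fin 4)) ∪
        ((Sum.inr ∘ Sum.inl) '' Y ∪ {Sum.inr (Sum.inr 3)}))
      ((Sum.inr ∘ Sum.inl) '' X ∪ {Sum.inr (Sum.inr 2)}) ∧
    Disjoint (Sum.inl '' X ∪ {Sum.inr (Sum.inr 0)} : Set (V ⊕ V ⊕ Fin 4))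
      ((Sum.inr ∘ Sum.inl) '' X ∪ {Sum.inr (Sum.inr 2)}) ∧
    -- the three parts are independent sets
    (∀ a ∈ ((Sum.inl '' Y ∪ {Sum.inr (Sum.inr 1)} : Set (V ⊕ V ⊕ Fin 4)) ∪
        ((Sum.inr ∘ Sum.inl) '' Y ∪ {Sum.inr (Sum.inr 3)})),
      ∀ b ∈ ((Sum.inl '' Y ∪ {Sum.inr (Sum.inr 1)} : Set (V ⊕ V ⊕ Fin 4)) ∪
        ((Sum.inr ∘ Sum.inl) '' Y ∪ {Sum.inr (Sum.inr 3)})),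
        ¬ (bipartiteBigExt G X).Adj a b) ∧
    (∀ a ∈ (Sum.inl '' X ∪ {Sum.inr (Sum.inr 0)} : Set (V ⊕ V ⊕ Fin 4)),
      ∀ b ∈ (Sum.inl '' X ∪ {Sum.inr (Sum.inr 0)} : Set (V ⊕ V ⊕ Fin 4)),
        ¬ (bipartiteBigExt G X).Adj a b) ∧
    (∀ a ∈ ((Sum.inr ∘ Sum.inl) '' X ∪ {Sum.inr (Sum.inr 2)} : Set (V ⊕ V ⊕ Fin 4)),
      ∀ b ∈ ((Sum.inr ∘ Sum.inl) '' X ∪ {Sum.inr (Sum.inr 2)} : Set (V ⊕ V ⊕ Fin 4)),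
        ¬ (bipartiteBigExt G X).Adj a b) ∧
    -- `K₁ ∪ K₂` induces a complete bipartite graph
    (∀ a ∈ (Sum.inl '' X ∪ {Sum.inr (Sum.inr 0)} : Set (V ⊕ V ⊕ Fin 4)),
      ∀ b ∈ ((Sum.inr ∘ Sum.inl) '' X ∪ {Sum.inr (Sum.inr 2)} : Set (V ⊕ V ⊕ Fin 4)),
        (bipartiteBigExt G X).Adj a b) ∧
    -- moreover `G'` is bipartite with bipartition `(K₁ ∪ I₂, K₂ ∪ I₁)`
    (∀ a ∈ ((Sum.inl '' X ∪ {Sum.inr (Sum.inr 0)} : Set (V ⊕ V ⊕ Fin 4)) ∪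
        ((Sum.inr ∘ Sum.inl) '' Y ∪ {Sum.inr (Sum.inr 3)})),
      ∀ b ∈ ((Sum.inl '' X ∪ {Sum.inr (Sum.inr 0)} : Set (V ⊕ V ⊕ Fin 4)) ∪
        ((Sum.inr ∘ Sum.inl) '' Y ∪ {Sum.inr (Sum.inr 3)})),
        ¬ (bipartiteBigExt G X).Adj a b) ∧
    (∀ a ∈ (((Sum.inr ∘ Sum.inl) '' X ∪ {Sum.inr (Sum.inr 2)} : Set (V ⊕ V ⊕ Fin 4)) ∪
        (Sum.inl '' Y ∪ {Sum.inr (Sum.inr 1)})),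
      ∀ b ∈ (((Sum.inr ∘ Sum.inl) '' X ∪ {Sum.inr (Sum.inr 2)} : Set (V ⊕ V ⊕ Fin 4)) ∪
        (Sum.inl '' Y ∪ {Sum.inr (Sum.inr 1)})),
        ¬ (bipartiteBigExt G X).Adj a b) := by

  have hYX : ∀ a ∈ Y, a ∉ X := fun a ha hx => hdisj.le_bot ⟨hx, ha⟩
  refine ⟨?_, ?_, ?_, ?_, ?_, ?_, ?_, ?_, ?_, ?_⟩
  · ext a
    simp only [Set.mem_univ, iff_true]
    rcases a with u | u | i
    · rcases (hpart ▸ Set.mem_univ u : u ∈ X ∪ Y) with h | h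
      · exact Or.inl (Or.inr (Or.inl ⟨u, h, rfl⟩))
      · exact Or.inl (Or.inl (Or.inl (Or.inl ⟨u, h, rfl⟩)))
    · rcases (hpart ▸ Set.mem_univ u : u ∈ X ∪ Y) with h | h
      · exact Or.inr (Or.inl ⟨u, h, rfl⟩)
      · exact Or.inl (Or.inl (Or.inr (Or.inl ⟨u, h, rfl⟩)))
    · fin_cases i
      · exact Or.inl (Or.inr (Or.inr rfl))
      · exact Or.inl (Or.inl (Or.inl (Or.inr rfl)))
      · exact Or.inr (Or.inr rfl)
      · exact Or.inl (Or.inl (Or.inr (Or.inr rfl)))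
  · rw [Set.disjoint_left]
    rintro a ((⟨u, hu, rfl⟩ | rfl) | (⟨u, hu, rfl⟩ | rfl)) (⟨v, hv, h⟩ | h) <;>
      simp_all <;> exact hYX _ hu (h ▸ hv)
  · rw [Set.disjoint_left]
    rintro a ((⟨u, hu, rfl⟩ | rfl) | (⟨u, hu, rfl⟩ | rfl)) (⟨v, hv, h⟩ | h) <;>
      simp_all <;> exact hYX _ hu (h ▸ hv)
  · rw [Set.disjoint_left]
    rintro a (⟨u, hu, rfl⟩ | rfl) (⟨v, hv, h⟩ | h) <;> simp_all
  · rintro a ((⟨u, hu, rfl⟩ | rfl) | (⟨u, hu, rfl⟩ | rfl)) b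
        ((⟨v, hv, rfl⟩ | rfl) | (⟨v, hv, rfl⟩ | rfl)) <;>
      simp [bipartiteBigExt, SimpleGraph.fromRel_adj] <;> aesop
  · rintro a (⟨u, hu, rfl⟩ | rfl) b (⟨v, hv, rfl⟩ | rfl) <;>
      simp [bipartiteBigExt, SimpleGraph.fromRel_adj] <;> aesop
  · rintro a (⟨u, hu, rfl⟩ | rfl) b (⟨v, hv, rfl⟩ | rfl) <;>
      simp [bipartiteBigExt, SimpleGraph.fromRel_adj] <;> aesop
  · rintro a (⟨u, hu, rfl⟩ | rfl) b (⟨v, hv, rfl⟩ | rfl) <;>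
      simp [bipartiteBigExt, SimpleGraph.fromRel_adj] <;> aesop
  · rintro a ((⟨u, hu, rfl⟩ | rfl) | (⟨u, hu, rfl⟩ | rfl)) b
        ((⟨v, hv, rfl⟩ | rfl) | (⟨v, hv, rfl⟩ | rfl)) <;>
      simp [bipartiteBigExt, SimpleGraph.fromRel_adj] <;> aesop
  · rintro a ((⟨u, hu, rfl⟩ | rfl) | (⟨v, hv, rfl⟩ | rfl)) b
        ((⟨v, hv, rfl⟩ | rfl) | (⟨w, hw, rfl⟩ | rfl)) <;>
      simp [bipartiteBigExt, SimpleGraph.fromRel_adj] <;> aesop
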